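/- Let G = (V, E) be a directed acyclic graph with a weight function w on its edges taking values in a commutative ring, and let u_1, ..., u_p and v_1, ..., v_p be vertices such that for all i, j there are only finitely many directed paths from u_j to v_i. Assume that the only permutation π of {1,...,p} for which there exists a family (P_1, ..., P_p) of pairwise vertex-disjoint directed paths with P_i running from u_i to v_{π(i)} is the identity permutation. Then the sum of Π_{i=1}^p w(P_i) over all families (P_1, ..., P_p) of pairwise vertex-disjoint directed paths with P_i running from u_i to v_i equals det_{1 ≤ i,j ≤ p} ( GF(P(u_j → v_i); w) ), where GF(P(u → v); w) is the sum of w(P) over all directed paths P from u to v. -/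

import Mathlib

/-!
Expanding the determinant writes it as a signed sum over pairs `(σ, F)` of a permutation and a
family of paths `F i` from `u i` to `v (σ i)`. On the pairs whose paths intersect, swapping the
tails of two paths at a canonically chosen common vertex is an involution that preserves the
total weight and flips the sign of `σ`, so these terms cancel. By hypothesis the remaining
vertex-disjoint families all belong to `σ = 1`.
-/

/-- A directed path in the directed graph with adjacency relation `adjE`: a nonempty
list of vertices with each consecutive pair joined by a directed edge. -/
def IsDPath {V : Type*} (adjE : V → V → Prop) (L : List V) : Prop :=
  L ≠ [] ∧ L.Chain' adjE

/-- The weight of a directed path: the product of the weights of its edges. -/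
def pathWeight {V R : Type*} [CommRing R] (w : V → V → R) (L : List V) : R :=
  ((L.zip L.tail).map (fun e => w e.1 e.2)).prod

namespace List

variable {α : Type*}

theorem exists_append_cons_of_exists {P : α → Prop} {L : List α} (h : ∃ a ∈ L, P a) :
    ∃ A x B, L = A ++ x :: B ∧ P x ∧ ∀ a ∈ A, ¬ P a := by
  classical
  obtain ⟨x, hx⟩ := Option.isSome_iff_exists.1 (find?_isSome (p := fun a => decide (P a)).2
    (by simpa using h))
  obtain ⟨hPx, A, B, rfl, hA⟩ := find?_eq_some_iff_append.1 hx
  exact ⟨A, x, B, rfl, by simpa using hPx, by simpa using hA⟩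

theorem append_cons_inj_of_forall_not {P : α → Prop} {A A' B B' : List α} {x x' : α}
    (hA : ∀ a ∈ A, ¬ P a) (hx : P x) (hA' : ∀ a ∈ A', ¬ P a) (hx' : P x')
    (h : A ++ x :: B = A' ++ x' :: B') : A = A' ∧ x = x' ∧ B = B' := by
  classical
  have takeWhile_eq : ∀ {A : List α} {x B}, (∀ a ∈ A, ¬ P a) → P x →
      (A ++ x :: B).takeWhile (fun a => !decide (P a)) = A := by
    intro A x B hA hx
    rw [takeWhile_append_of_pos (by simpa using hA)]
    simp [hx]
  obtain rfl : A = A' := by rw [← takeWhile_eq hA hx, h, takeWhile_eq hA' hx']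
  simpa using h

end List

section Paths

variable {V R : Type*} [CommRing R]

theorem IsDPath.nodup {adjE : V → V → Prop} (hacyclic : ∀ a, ¬ Relation.TransGen adjE a a)
    {L : List V} (h : IsDPath adjE L) : L.Nodup :=
  (List.isChain_iff_pairwise.1 (h.2.imp fun _ _ => Relation.TransGen.single)).imp (S := (· ≠ ·))
    fun hab heq => hacyclic _ (heq ▸ hab)

theorem pathWeight_append_cons (w : V → V → R) (A : List V) (x : V) (B : List V) :
    pathWeight w (A ++ x :: B) = pathWeight w (A ++ [x]) * pathWeight w (x :: B) := by
  induction A with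
  | nil => simp [pathWeight]
  | cons a A ih => cases A <;> simp_all [pathWeight, mul_assoc]

theorem pathWeight_swap_tails (w : V → V → R) (A B C D : List V) (x : V) :
    pathWeight w (A ++ x :: D) * pathWeight w (C ++ x :: B) =
      pathWeight w (A ++ x :: B) * pathWeight w (C ++ x :: D) := by
  rw [pathWeight_append_cons w A x D, pathWeight_append_cons w C x B,
    pathWeight_append_cons w A x B, pathWeight_append_cons w C x D]
  ring

def pathsBetween (adjE : V → V → Prop) (a b : V) : Set (List V) :=
  {L | IsDPath adjE L ∧ L.head? = some a ∧ L.getLast? = some b}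

theorem append_cons_mem_pathsBetween {adjE : V → V → Prop} {a b c d x : V} {A B C D : List V}
    (h₁ : A ++ x :: B ∈ pathsBetween adjE a b) (h₂ : C ++ x :: D ∈ pathsBetween adjE c d) :
    A ++ x :: D ∈ pathsBetween adjE a d := by
  obtain ⟨⟨-, hchain₁⟩, ha, -⟩ := h₁
  obtain ⟨⟨-, hchain₂⟩, -, hd⟩ := h₂
  refine ⟨⟨by simp, ?_⟩, by cases A <;> simpa using ha, by simpa using hd⟩
  rw [List.Chain', List.isChain_append] at hchain₁ ⊢
  exact ⟨hchain₁.1, hchain₂.right_of_append, by simpa using hchain₁.2.2⟩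

end Paths

section PathFamilies

variable {V ι : Type*}

def IsPathFamily (adjE : V → V → Prop) (u v : ι → V) (σ : Equiv.Perm ι) (F : ι → List V) :
    Prop :=
  ∀ i, F i ∈ pathsBetween adjE (u i) (v (σ i))

def IsVertexDisjoint (F : ι → List V) : Prop :=
  ∀ i j, i ≠ j → ∀ a ∈ F i, a ∉ F j

end PathFamilies

/-- A point where two paths `F i = A ++ x :: B` and `F j = C ++ x :: D` of a family meet. -/
@[ext]
structure Crossing (ι V : Type*) where
  i : ι
  j : ι
  x : V
  A : List V
  B : List V
  C : List V
  D : List V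

namespace Crossing

variable {ι V : Type*}

def swap (c : Crossing ι V) : Crossing ι V :=
  { c with B := c.D, D := c.B }

section Apply

variable [DecidableEq ι] (c : Crossing ι V) (F : ι → List V)

def apply : ι → List V :=
  Function.update (Function.update F c.i (c.A ++ c.x :: c.D)) c.j (c.C ++ c.x :: c.B)

theorem apply_i (hij : c.i ≠ c.j) : c.apply F c.i = c.A ++ c.x :: c.D := by
  simp [apply, hij]

theorem apply_j : c.apply F c.j = c.C ++ c.x :: c.B := by
  simp [apply]

theorem apply_of_ne {k : ι} (hi : k ≠ c.i) (hj : k ≠ c.j) : c.apply F k = F k := by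
  simp [apply, hi, hj]

end Apply

variable [LinearOrder ι]

/-- The canonical crossing of `F`: `i` is the least index whose path meets another path, `x` the
first vertex of `F i` on another path, `j` the least other index whose path visits `x`. Swapping
the tails leaves these choices unchanged, so the swap is an involution. -/
structure IsFirst (c : Crossing ι V) (F : ι → List V) : Prop where
  lt : c.i < c.j
  eq_i : F c.i = c.A ++ c.x :: c.B
  eq_j : F c.j = c.C ++ c.x :: c.D
  disjoint_of_lt : ∀ k < c.i, ∀ l ≠ k, ∀ y ∈ F k, y ∉ F l
  notMem_of_mem_A : ∀ y ∈ c.A, ∀ l ≠ c.i, y ∉ F l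
  le_j : ∀ l ≠ c.i, c.x ∈ F l → c.j ≤ l
  x_notMem_C : c.x ∉ c.C

variable {c c' : Crossing ι V} {F : ι → List V}

theorem exists_isFirst [WellFoundedLT ι] (hF : ¬ IsVertexDisjoint F) :
    ∃ c : Crossing ι V, c.IsFirst F := by
  obtain ⟨i, ⟨l₀, hl₀, y₀, hy₀, hy₀l⟩, hi_min⟩ := wellFounded_lt.has_min
    {k | ∃ l ≠ k, ∃ y ∈ F k, y ∈ F l} (by
      simp only [IsVertexDisjoint, not_forall, not_not] at hF
      obtain ⟨k, l, hkl, y, hy, hyl⟩ := hF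
      exact ⟨k, l, hkl.symm, y, hy, hyl⟩)
  obtain ⟨A, x, B, hFi, ⟨l₁, hl₁, hxl₁⟩, hA⟩ :=
    List.exists_append_cons_of_exists (P := fun y => ∃ l ≠ i, y ∈ F l) ⟨y₀, hy₀, l₀, hl₀, hy₀l⟩
  obtain ⟨j, ⟨hji, hxj⟩, hj_min⟩ := wellFounded_lt.has_min {l | l ≠ i ∧ x ∈ F l} ⟨l₁, hl₁, hxl₁⟩
  obtain ⟨C, x', D, hFj, rfl, hC⟩ :=
    List.exists_append_cons_of_exists (P := (· = x)) ⟨x, hxj, rfl⟩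
  have hxi : x' ∈ F i := by simp [hFi]
  refine ⟨⟨i, j, x', A, B, C, D⟩,
    ⟨lt_of_le_of_ne (not_lt.1 fun hji' => hi_min j ⟨i, hji.symm, x', hxj, hxi⟩ hji') hji.symm,
      hFi, hFj, ?_, fun y hy l hl hyl => hA y hy ⟨l, hl, hyl⟩,
      fun l hl hxl => not_lt.1 (hj_min l ⟨hl, hxl⟩), fun hx => hC x' hx rfl⟩⟩
  intro k hk l hlk y hyk hyl
  exact hi_min k ⟨l, hlk, y, hyk, hyl⟩ hk

namespace IsFirst

theorem mem_i (h : c.IsFirst F) : c.x ∈ F c.i := by simp [h.eq_i]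

theorem mem_j (h : c.IsFirst F) : c.x ∈ F c.j := by simp [h.eq_j]

theorem not_isVertexDisjoint (h : c.IsFirst F) : ¬ IsVertexDisjoint F :=
  fun hF => hF c.i c.j h.lt.ne c.x h.mem_i h.mem_j

theorem unique (h : c.IsFirst F) (h' : c'.IsFirst F) : c = c' := by
  have hi : c.i = c'.i := by
    by_contra hne
    rcases lt_or_gt_of_ne hne with hlt | hlt
    · exact h'.disjoint_of_lt c.i hlt c.j h.lt.ne' c.x h.mem_i h.mem_j
    · exact h.disjoint_of_lt c'.i hlt c'.j h'.lt.ne' c'.x h'.mem_i h'.mem_j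
  obtain ⟨hA, hx, hB⟩ := List.append_cons_inj_of_forall_not (P := fun y => ∃ l ≠ c.i, y ∈ F l)
    (fun y hy ⟨l, hl, hyl⟩ => h.notMem_of_mem_A y hy l hl hyl) ⟨c.j, h.lt.ne', h.mem_j⟩
    (fun y hy ⟨l, hl, hyl⟩ => h'.notMem_of_mem_A y hy l (hi ▸ hl) hyl)
    ⟨c'.j, hi ▸ h'.lt.ne', h'.mem_j⟩ (h.eq_i.symm.trans (hi ▸ h'.eq_i))
  have hj : c.j = c'.j := le_antisymm (h.le_j _ (hi ▸ h'.lt.ne') (hx ▸ h'.mem_j))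
    (h'.le_j _ (hi ▸ h.lt.ne') (hx ▸ h.mem_j))
  obtain ⟨hC, -, hD⟩ := List.append_cons_inj_of_forall_not (P := (· = c.x))
    (fun y hy hyx => h.x_notMem_C (hyx ▸ hy)) rfl
    (fun y hy hyx => h'.x_notMem_C (hx ▸ hyx ▸ hy)) hx.symm
    (h.eq_j.symm.trans (hj ▸ h'.eq_j))
  exact Crossing.ext hi hj hx hA hB hC hD

theorem swap_apply_apply (h : c.IsFirst F) : c.swap.apply (c.apply F) = F := by
  funext k
  rcases eq_or_ne k c.i with rfl | hi
  · exact (c.swap.apply_i _ h.lt.ne).trans h.eq_i.symm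
  rcases eq_or_ne k c.j with rfl | hj
  · exact (c.swap.apply_j _).trans h.eq_j.symm
  rw [c.swap.apply_of_ne _ hi hj, c.apply_of_ne _ hi hj]

theorem mem_apply {k : ι} {y : V} (h : c.IsFirst F) (hy : y ∈ c.apply F k) :
    y ∈ F k ∨ y ∈ F c.i ∨ y ∈ F c.j := by
  rcases eq_or_ne k c.i with rfl | hi
  · rw [c.apply_i F h.lt.ne, List.mem_append, List.mem_cons] at hy
    rw [h.eq_i, h.eq_j]
    aesop
  rcases eq_or_ne k c.j with rfl | hj
  · rw [c.apply_j F, List.mem_append, List.mem_cons] at hy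
    rw [h.eq_i, h.eq_j]
    aesop
  exact .inl (c.apply_of_ne F hi hj ▸ hy)

theorem swap (h : c.IsFirst F) (hnodup : (F c.i).Nodup) : c.swap.IsFirst (c.apply F) := by
  refine ⟨h.lt, c.apply_i F h.lt.ne, c.apply_j F, ?_, ?_, ?_, h.x_notMem_C⟩
  · intro k hk l hlk y hyk hyl
    rw [c.apply_of_ne F hk.ne (hk.trans h.lt).ne] at hyk
    rcases h.mem_apply hyl with hyl | hyl | hyl
    · exact h.disjoint_of_lt k hk l hlk y hyk hyl
    · exact h.disjoint_of_lt k hk c.i hk.ne' y hyk hyl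
    · exact h.disjoint_of_lt k hk c.j (hk.trans h.lt).ne' y hyk hyl
  · intro y hy l hl hyl
    rcases eq_or_ne l c.j with rfl | hj
    · rw [c.apply_j F, List.mem_append, List.mem_cons] at hyl
      have hAB : y ∉ c.x :: c.B := (List.nodup_append'.1 (h.eq_i ▸ hnodup)).2.2 hy
      rcases hyl with hyC | rfl | hyB
      · exact h.notMem_of_mem_A y hy c.j hl (by simp [h.eq_j, hyC])
      · exact hAB (List.mem_cons_self ..)
      · exact hAB (List.mem_cons_of_mem _ hyB)
    · exact h.notMem_of_mem_A y hy l hl (c.apply_of_ne F hl hj ▸ hyl)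
  · intro l hl hxl
    rcases eq_or_ne l c.j with rfl | hj
    · exact le_rfl
    · exact h.le_j l hl (c.apply_of_ne F hl hj ▸ hxl)

variable {R : Type*}

theorem isPathFamily_apply {adjE : V → V → Prop} {u v : ι → V} {σ : Equiv.Perm ι}
    (h : c.IsFirst F) (hF : IsPathFamily adjE u v σ F) :
    IsPathFamily adjE u v (σ * Equiv.swap c.i c.j) (c.apply F) := by
  have hi := h.eq_i ▸ hF c.i
  have hj := h.eq_j ▸ hF c.j
  intro k
  rcases eq_or_ne k c.i with rfl | hki
  · simpa [c.apply_i F h.lt.ne] using append_cons_mem_pathsBetween hi hj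
  rcases eq_or_ne k c.j with rfl | hkj
  · simpa [c.apply_j F] using append_cons_mem_pathsBetween hj hi
  simpa [c.apply_of_ne F hki hkj, Equiv.swap_apply_of_ne_of_ne hki hkj] using hF k

theorem prod_pathWeight_apply [Fintype ι] [CommRing R] (w : V → V → R) (h : c.IsFirst F) :
    ∏ k, pathWeight w (c.apply F k) = ∏ k, pathWeight w (F k) := by
  have split : ∀ G : ι → List V, ∏ k, pathWeight w (G k) =
      pathWeight w (G c.i) * pathWeight w (G c.j) * ∏ k ∈ {c.i, c.j}ᶜ, pathWeight w (G k) :=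
    fun G => by rw [← Finset.prod_pair (f := fun k => pathWeight w (G k)) h.lt.ne,
      Finset.prod_mul_prod_compl]
  have rest : ∀ k ∈ ({c.i, c.j} : Finset ι)ᶜ, pathWeight w (c.apply F k) = pathWeight w (F k) := by
    intro k hk
    simp only [Finset.mem_compl, Finset.mem_insert, Finset.mem_singleton, not_or] at hk
    rw [c.apply_of_ne F hk.1 hk.2]
  rw [split, split F, Finset.prod_congr rfl rest, c.apply_i F h.lt.ne, c.apply_j F, h.eq_i, h.eq_j,
    pathWeight_swap_tails]

end IsFirst

end Crossing

section Involution

variable {ι V R : Type*} [LinearOrder ι]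

open Classical in
/-- The sign-reversing, weight-preserving involution on intersecting path families. -/
noncomputable def crossingSwap (a : Equiv.Perm ι × (ι → List V)) : Equiv.Perm ι × (ι → List V) :=
  if h : ∃ c : Crossing ι V, c.IsFirst a.2 then
    (a.1 * Equiv.swap h.choose.i h.choose.j, h.choose.apply a.2)
  else a

variable {c : Crossing ι V} {a : Equiv.Perm ι × (ι → List V)}

theorem Crossing.IsFirst.crossingSwap_eq (h : c.IsFirst a.2) :
    crossingSwap a = (a.1 * Equiv.swap c.i c.j, c.apply a.2) := by
  have hex : ∃ c : Crossing ι V, c.IsFirst a.2 := ⟨c, h⟩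
  rw [crossingSwap, dif_pos hex, hex.choose_spec.unique h]

theorem Crossing.IsFirst.crossingSwap_crossingSwap (h : c.IsFirst a.2) (hnodup : (a.2 c.i).Nodup) :
    crossingSwap (crossingSwap a) = a := by
  rw [h.crossingSwap_eq, (h.swap hnodup).crossingSwap_eq, h.swap_apply_apply]
  exact Prod.ext (by simp [Crossing.swap, mul_assoc]) rfl

open Classical in
theorem sum_filter_not_isVertexDisjoint_eq_zero [Fintype ι] [CommRing R] {adjE : V → V → Prop}
    {u v : ι → V} (hacyclic : ∀ a, ¬ Relation.TransGen adjE a a) (w : V → V → R)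
    (s : Finset (Equiv.Perm ι × (ι → List V)))
    (hs : ∀ a, a ∈ s ↔ IsPathFamily adjE u v a.1 a.2) :
    ∑ a ∈ s with ¬ IsVertexDisjoint a.2, Equiv.Perm.sign a.1 • ∏ k, pathWeight w (a.2 k) = 0 := by
  have crossing : ∀ a ∈ s.filter (¬ IsVertexDisjoint ·.2),
      IsPathFamily adjE u v a.1 a.2 ∧ ∃ c : Crossing ι V, c.IsFirst a.2 := by
    intro a ha
    rw [Finset.mem_filter, hs] at ha
    exact ⟨ha.1, Crossing.exists_isFirst ha.2⟩
  refine Finset.sum_involution (fun a _ => crossingSwap a) ?_ ?_ ?_ ?_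
  · intro a ha
    obtain ⟨-, c, hc⟩ := crossing a ha
    rw [hc.crossingSwap_eq, hc.prod_pathWeight_apply, Equiv.Perm.sign_mul,
      Equiv.Perm.sign_swap hc.lt.ne]
    simp
  · intro a ha _ heq
    obtain ⟨-, c, hc⟩ := crossing a ha
    rw [hc.crossingSwap_eq] at heq
    exact hc.lt.ne (Equiv.swap_eq_one_iff.1 (mul_eq_left.1 (congrArg Prod.fst heq)))
  · intro a ha
    obtain ⟨hF, c, hc⟩ := crossing a ha
    rw [hc.crossingSwap_eq, Finset.mem_filter, hs]
    exact ⟨hc.isPathFamily_apply hF, (hc.swap ((hF c.i).1.nodup hacyclic)).not_isVertexDisjoint⟩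
  · intro a ha
    obtain ⟨hF, c, hc⟩ := crossing a ha
    exact hc.crossingSwap_crossingSwap ((hF c.i).1.nodup hacyclic)

end Involution

section Determinant

variable {ι V R : Type*} [Fintype ι] [DecidableEq ι] [CommRing R] {adjE : V → V → Prop}
  {u v : ι → V}

omit [DecidableEq ι] in
theorem finite_setOf_isPathFamily (hfin : ∀ i j, (pathsBetween adjE (u j) (v i)).Finite) :
    {a : Equiv.Perm ι × (ι → List V) | IsPathFamily adjE u v a.1 a.2}.Finite := by
  refine (Set.finite_univ.prod (Set.Finite.pi fun i => Set.finite_iUnion fun j => hfin j i)).subset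
    fun a ha => ?_
  exact ⟨trivial, fun i _ => Set.mem_iUnion.2 ⟨a.1 i, ha i⟩⟩

theorem det_eq_sum_isPathFamily (w : V → V → R)
    (hfin : ∀ i j, (pathsBetween adjE (u j) (v i)).Finite)
    (s : Finset (Equiv.Perm ι × (ι → List V))) (hs : ∀ a, a ∈ s ↔ IsPathFamily adjE u v a.1 a.2) :
    Matrix.det (fun i j => ∑ᶠ L : pathsBetween adjE (u j) (v i), pathWeight w L) =
      ∑ a ∈ s, Equiv.Perm.sign a.1 • ∏ k, pathWeight w (a.2 k) := by
  have entry : ∀ i j, ∑ᶠ L : pathsBetween adjE (u j) (v i), pathWeight w L =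
      ∑ L ∈ (hfin i j).toFinset, pathWeight w L := fun i j => by
    rw [finsum_set_coe_eq_finsum_mem, finsum_mem_eq_finite_toFinset_sum]
  refine (Matrix.det_apply _).trans ?_
  simp only [entry]
  rw [Finset.sum_finset_product' s Finset.univ
    (fun σ => Fintype.piFinset fun k => (hfin (σ k) k).toFinset) (by simp [hs, IsPathFamily])
    (f := fun σ F => Equiv.Perm.sign σ • ∏ k, pathWeight w (F k))]
  refine Finset.sum_congr rfl fun σ _ => ?_
  rw [Finset.prod_univ_sum, Finset.smul_sum]

open Classical in
theorem sum_filter_isVertexDisjoint_eq_finsum (w : V → V → R)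
    (honly : ∀ σ : Equiv.Perm ι, (∃ F, IsPathFamily adjE u v σ F ∧ IsVertexDisjoint F) → σ = 1)
    (s : Finset (Equiv.Perm ι × (ι → List V))) (hs : ∀ a, a ∈ s ↔ IsPathFamily adjE u v a.1 a.2) :
    ∑ a ∈ s with IsVertexDisjoint a.2, Equiv.Perm.sign a.1 • ∏ k, pathWeight w (a.2 k) =
      ∑ᶠ F ∈ {F | IsPathFamily adjE u v 1 F ∧ IsVertexDisjoint F}, ∏ k, pathWeight w (F k) := by
  have hone : ∀ a ∈ s.filter (IsVertexDisjoint ·.2), a.1 = 1 := fun a ha => by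
    rw [Finset.mem_filter, hs] at ha
    exact honly a.1 ⟨a.2, ha⟩
  have hset : {F | IsPathFamily adjE u v 1 F ∧ IsVertexDisjoint F} =
      ↑((s.filter (IsVertexDisjoint ·.2)).image Prod.snd) := by
    ext F
    simp only [Set.mem_ofPred_eq, Finset.coe_image, Set.mem_image, Finset.mem_coe]
    refine ⟨fun hF => ⟨(1, F), by simpa [hs] using hF, rfl⟩, ?_⟩
    rintro ⟨a, ha, rfl⟩
    rw [← hone a ha]
    simpa [hs] using ha
  rw [hset, finsum_mem_coe_finset, Finset.sum_image fun a ha b hb hab =>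
    Prod.ext ((hone a ha).trans (hone b hb).symm) hab]
  refine Finset.sum_congr rfl fun a ha => ?_
  simp [hone a ha]

end Determinant

/-- **Theorem 3.3 (Lindström, Gessel–Viennot)**: for a weighted directed acyclic graph
and vertices `u 1, …, u p`, `v 1, …, v p` such that there are finitely many paths from
each `u j` to each `v i`, if the only permutation `π` admitting a family of pairwise
vertex-disjoint paths from the `u i` to the `v (π i)` is the identity, then the sum of
the weights of the families of pairwise vertex-disjoint paths from the `u i` to the
`v i` equals `det (GF(P(u j → v i); w))_{1 ≤ i, j ≤ p}`. -/
theorem lindstrom_gessel_viennot {V R : Type*} [CommRing R]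
    (adjE : V → V → Prop) (w : V → V → R) (p : ℕ) (u v : Fin p → V)
    (hacyclic : ∀ a : V, ¬ Relation.TransGen adjE a a)
    (hfin : ∀ i j : Fin p,
      {L : List V | IsDPath adjE L ∧ L.head? = some (u j) ∧ L.getLast? = some (v i)}.Finite)
    (honly : ∀ π : Equiv.Perm (Fin p),
      (∃ F : Fin p → List V,
          (∀ i, IsDPath adjE (F i) ∧ (F i).head? = some (u i) ∧
            (F i).getLast? = some (v (π i))) ∧
          (∀ i j, i ≠ j → ∀ a ∈ F i, a ∉ F j)) → π = 1) :
    ∑ᶠ F : {F : Fin p → List V //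
        (∀ i, IsDPath adjE (F i) ∧ (F i).head? = some (u i) ∧
          (F i).getLast? = some (v i)) ∧
        (∀ i j, i ≠ j → ∀ a ∈ F i, a ∉ F j)},
      ∏ i : Fin p, pathWeight w (F.1 i)
    = Matrix.det (fun i j : Fin p =>
        ∑ᶠ L : {L : List V // IsDPath adjE L ∧ L.head? = some (u j) ∧
            L.getLast? = some (v i)}, pathWeight w L.1) := by
  classical
  obtain ⟨s, hs⟩ : ∃ s : Finset (Equiv.Perm (Fin p) × (Fin p → List V)),
      ∀ a, a ∈ s ↔ IsPathFamily adjE u v a.1 a.2 :=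
    ⟨_, fun _ => (finite_setOf_isPathFamily hfin).mem_toFinset⟩
  calc _ = ∑ᶠ F ∈ {F | IsPathFamily adjE u v 1 F ∧ IsVertexDisjoint F},
        ∏ k, pathWeight w (F k) := finsum_set_coe_eq_finsum_mem _
    _ = ∑ a ∈ s with IsVertexDisjoint a.2, Equiv.Perm.sign a.1 • ∏ k, pathWeight w (a.2 k) :=
        (sum_filter_isVertexDisjoint_eq_finsum w honly s hs).symm
    _ = ∑ a ∈ s, Equiv.Perm.sign a.1 • ∏ k, pathWeight w (a.2 k) := by
        rw [← Finset.sum_filter_add_sum_filter_not s (IsVertexDisjoint ·.2),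
          sum_filter_not_isVertexDisjoint_eq_zero hacyclic w s hs, add_zero]
    _ = _ := (det_eq_sum_isPathFamily w hfin s hs).symm
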